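/- arXiv:1607.02878 — 2 statements merged into one kernel-verified Lean document; each statement's English description precedes it below -/
import Mathlib

section
/- (1D free boundary problem, solutions.) With I(a,λ) as above: (i) if a < 2√(2/λ) the unique minimizer is u ≡ 1; (ii) if a > 2√(2/λ) the unique minimizer is the function u₂ given by u₂(x) = 1 − √(2λ)x for x ∈ [0, 1/√(2λ)], u₂(x) = 0 for x ∈ [1/√(2λ), a − 1/√(2λ)], and u₂(x) = √(2λ)x + 1 − √(2λ)a for x ∈ [a − 1/√(2λ), a]; (iii) if a = 2√(2/λ) exactly the two functions u ≡ 1 and u₂ are minimizers. -/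
open MeasureTheory

/-- Admissible class for the 1D free boundary problem: `u ∈ W^{1,2}(0,a)`
(represented by its continuous representative, primitive of `g ∈ L²`),
with boundary values `u(0) = u(a) = 1`. -/
def Adm1D (a : ℝ) (u g : ℝ → ℝ) : Prop :=
  ContinuousOn u (Set.Icc 0 a) ∧
  MemLp g 2 (volume.restrict (Set.Ioo 0 a)) ∧
  (∀ x ∈ Set.Icc 0 a, u x = 1 + ∫ s in (0:ℝ)..x, g s) ∧
  u 0 = 1 ∧ u a = 1

/-- The cost `∫_0^a |u'|²/2 dt + λ |{u ≠ 0}|`. -/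
noncomputable def cost1D (a l : ℝ) (u g : ℝ → ℝ) : ℝ :=
  (∫ s in Set.Ioo 0 a, g s ^ 2 / 2) +
    l * (volume {s | s ∈ Set.Ioo 0 a ∧ u s ≠ 0}).toReal

/-- The value `I(a,λ)` of the 1D free boundary problem. -/
noncomputable def I1D (a l : ℝ) : ℝ :=
  sInf {c | ∃ u g, Adm1D a u g ∧ c = cost1D a l u g}

/-- The explicit nontrivial candidate minimizer `u₂`. -/
noncomputable def uTwo (a l : ℝ) (x : ℝ) : ℝ :=
  if x ≤ 1 / Real.sqrt (2 * l) then 1 - Real.sqrt (2 * l) * x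
  else if x ≤ a - 1 / Real.sqrt (2 * l) then 0
  else Real.sqrt (2 * l) * x + 1 - Real.sqrt (2 * l) * a

/-- A minimizer of the 1D problem. -/
def Min1D (a l : ℝ) (u g : ℝ → ℝ) : Prop :=
  Adm1D a u g ∧ cost1D a l u g = I1D a l

/-! On an interval of length `t` across which `u` moves by `1`, Cauchy–Schwarz bounds the Dirichlet
energy below by `1 / (2 t)`, with equality only for the affine profile; adding the volume term
`λ t` and applying AM–GM gives at least `√(2λ)`, with equality only for `t = 1 / √(2λ)`.

If `u` has no zero in `(0, a)`, the cost is at least `λ a`, with equality only for `u ≡ 1`.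
Otherwise the intervals before the first zero `x₀` and after the last zero `x₁` each cost at
least `√(2λ)`, so the cost is at least `2 √(2λ)`. Equality forces both intervals to have length
`1 / √(2λ)` with affine `u` on them, and makes `{u ≠ 0} ∩ (x₀, x₁)` null; being open, it is
empty, so `u = u₂`. Hence `I(a, λ) = min (λ a) (2 √(2λ))`, and `λ a = 2 √(2λ)` is `a = 2 √(2/λ)`.
-/

open Set

theorem integral_sub_mean_sq {g : ℝ → ℝ} {c d : ℝ} (hg : IntervalIntegrable g volume c d)
    (hg2 : IntervalIntegrable (fun x => g x ^ 2) volume c d) :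
    ∫ x in c..d, (g x - (∫ t in c..d, g t) / (d - c)) ^ 2 =
      (∫ x in c..d, g x ^ 2) - (∫ x in c..d, g x) ^ 2 / (d - c) := by
  set m := (∫ t in c..d, g t) / (d - c) with hm
  have hpt : ∀ x, (g x - m) ^ 2 = g x ^ 2 - 2 * m * g x + m ^ 2 := fun x => by ring
  simp_rw [hpt]
  rw [intervalIntegral.integral_add (hg2.sub (hg.const_mul _)) intervalIntegrable_const,
    intervalIntegral.integral_sub hg2 (hg.const_mul _), intervalIntegral.integral_const_mul,
    intervalIntegral.integral_const, smul_eq_mul, hm]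
  rcases eq_or_ne (d - c) 0 with h | h
  · simp [h]
  · field_simp
    ring

theorem sq_integral_div_le_integral_sq {g : ℝ → ℝ} {c d : ℝ} (hcd : c ≤ d)
    (hg : IntervalIntegrable g volume c d)
    (hg2 : IntervalIntegrable (fun x => g x ^ 2) volume c d) :
    (∫ x in c..d, g x) ^ 2 / (d - c) ≤ ∫ x in c..d, g x ^ 2 := by
  have := intervalIntegral.integral_nonneg (μ := volume) hcd fun x _ =>
    sq_nonneg (g x - (∫ t in c..d, g t) / (d - c))
  rw [integral_sub_mean_sq hg hg2] at this
  linarith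

theorem integral_eq_mul_of_integral_sq_eq {g : ℝ → ℝ} {c d : ℝ} (hcd : c ≤ d)
    (hg : IntervalIntegrable g volume c d)
    (hg2 : IntervalIntegrable (fun x => g x ^ 2) volume c d)
    (heq : ∫ x in c..d, g x ^ 2 = (∫ x in c..d, g x) ^ 2 / (d - c)) :
    ∀ x ∈ Icc c d, ∫ t in c..x, g t = (∫ t in c..d, g t) / (d - c) * (x - c) := by
  set m := (∫ t in c..d, g t) / (d - c)
  have hint : IntervalIntegrable (fun x => (g x - m) ^ 2) volume c d := by
    simp_rw [sub_sq]
    exact (hg2.sub ((hg.const_mul 2).mul_const m)).add intervalIntegrable_const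
  have hae : ∀ᵐ x ∂volume.restrict (Ioc c d), g x = m := by
    have hzero : ∫ x in c..d, (g x - m) ^ 2 = 0 := by
      rw [integral_sub_mean_sq hg hg2, heq, sub_self]
    filter_upwards [(intervalIntegral.integral_eq_zero_iff_of_le_of_nonneg_ae hcd
      (ae_of_all _ fun x => sq_nonneg (g x - m)) hint).1 hzero] with x hx
    simpa [sub_eq_zero] using hx
  intro x hx
  rw [mul_comm, ← smul_eq_mul, ← intervalIntegral.integral_const]
  refine intervalIntegral.integral_congr_ae ?_
  rw [uIoc_of_le hx.1]
  exact (ae_restrict_iff' measurableSet_Ioc).1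
    (ae_restrict_of_ae_restrict_of_subset (Ioc_subset_Ioc_right hx.2) hae)

theorem one_div_add_mul_eq_sqrt_add_sq {l t : ℝ} (hl : 0 ≤ l) (ht : 0 < t) :
    1 / (2 * t) + l * t = √(2 * l) + (1 - √(2 * l) * t) ^ 2 / (2 * t) := by
  have := Real.sq_sqrt (by positivity : 0 ≤ 2 * l)
  field_simp
  linear_combination (-t^2) * this

theorem sqrt_two_mul_le_one_div_add_mul {l t : ℝ} (hl : 0 ≤ l) (ht : 0 < t) :
    √(2 * l) ≤ 1 / (2 * t) + l * t := by
  rw [one_div_add_mul_eq_sqrt_add_sq hl ht]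
  have : 0 ≤ (1 - √(2 * l) * t) ^ 2 / (2 * t) := by positivity
  linarith

theorem eq_one_div_sqrt_of_one_div_add_mul_eq {l t : ℝ} (hl : 0 ≤ l) (ht : 0 < t)
    (h : 1 / (2 * t) + l * t = √(2 * l)) : t = 1 / √(2 * l) := by
  rw [one_div_add_mul_eq_sqrt_add_sq hl ht, add_eq_left, div_eq_zero_iff, sq_eq_zero_iff] at h
  rcases h with h | h
  · have hst : √(2 * l) * t = 1 := by linarith
    rw [eq_div_iff (left_ne_zero_of_mul_eq_one hst)]
    linarith
  · linarith

theorem intervalIntegrable_of_integrableOn_Ioo {f : ℝ → ℝ} {p q c d : ℝ}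
    (hf : IntegrableOn f (Ioo p q)) (hc : c ∈ Icc p q) (hd : d ∈ Icc p q) :
    IntervalIntegrable f volume c d := by
  rw [← integrableOn_Icc_iff_integrableOn_Ioo] at hf
  exact (hf.mono_set (uIcc_subset_Icc hc hd)).intervalIntegrable

theorem integral_eq_mul_of_eqOn_Ioc {f : ℝ → ℝ} {p q c : ℝ} (hpq : p ≤ q)
    (h : EqOn f (fun _ => c) (Ioc p q)) : ∫ x in p..q, f x = (q - p) * c := by
  rw [intervalIntegral.integral_congr_ae (g := fun _ => c)
    (ae_of_all _ fun x hx => h (uIoc_of_le hpq ▸ hx)), intervalIntegral.integral_const, smul_eq_mul]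

theorem ContinuousOn.eq_zero_of_volume_setOf_ne_zero {u : ℝ → ℝ} {s : Set ℝ}
    (hu : ContinuousOn u s) (hs : IsOpen s) (h : volume {x | x ∈ s ∧ u x ≠ 0} = 0) :
    ∀ x ∈ s, u x = 0 := by
  have hopen : IsOpen {x | x ∈ s ∧ u x ≠ 0} := hu.isOpen_inter_preimage hs isOpen_ne
  intro x hx
  by_contra hne
  exact ((hopen.measure_eq_zero_iff volume).1 h).subset ⟨hx, hne⟩

structure IsFirstLastZero (u : ℝ → ℝ) (p q x₀ x₁ : ℝ) : Prop where
  lt_first : p < x₀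
  first_le_last : x₀ ≤ x₁
  last_lt : x₁ < q
  first_zero : u x₀ = 0
  last_zero : u x₁ = 0
  ne_zero_before : ∀ x ∈ Ioo p x₀, u x ≠ 0
  ne_zero_after : ∀ x ∈ Ioo x₁ q, u x ≠ 0

theorem ContinuousOn.exists_isFirstLastZero {u : ℝ → ℝ} {p q : ℝ} (hu : ContinuousOn u (Icc p q))
    (hp : u p ≠ 0) (hq : u q ≠ 0) (hz : ∃ x ∈ Icc p q, u x = 0) :
    ∃ x₀ x₁, IsFirstLastZero u p q x₀ x₁ := by
  set Z := Icc p q ∩ u ⁻¹' {0}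
  have hZ : IsClosed Z := hu.preimage_isClosed_of_isClosed isClosed_Icc isClosed_singleton
  have hne : Z.Nonempty := hz
  have hbb : BddBelow Z := ⟨p, fun x hx => hx.1.1⟩
  have hba : BddAbove Z := ⟨q, fun x hx => hx.1.2⟩
  obtain ⟨⟨hp₀, hq₀⟩, hu₀⟩ := hZ.csInf_mem hne hbb
  obtain ⟨⟨hp₁, hq₁⟩, hu₁⟩ := hZ.csSup_mem hne hba
  refine ⟨sInf Z, sSup Z, hp₀.lt_of_ne ?_, csInf_le_csSup hne hbb hba, hq₁.lt_of_ne ?_, hu₀, hu₁,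
    fun x hx h => ?_, fun x hx h => ?_⟩
  · intro h; rw [← h] at hu₀; exact hp hu₀
  · intro h; rw [h] at hu₁; exact hq hu₁
  · exact (csInf_le hbb ⟨⟨hx.1.le, hx.2.le.trans hq₀⟩, h⟩).not_gt hx.2
  · exact (le_csSup hba ⟨⟨hp₁.trans hx.1.le, hx.2.le⟩, h⟩).not_gt hx.1

theorem cost1D_eq_integral_of_nonneg {a : ℝ} (l : ℝ) (u g : ℝ → ℝ) (ha : 0 ≤ a) :
    cost1D a l u g =
      (∫ x in 0..a, g x ^ 2 / 2) + l * volume.real {x | x ∈ Ioo 0 a ∧ u x ≠ 0} := by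
  rw [cost1D, intervalIntegral.integral_of_le ha, integral_Ioc_eq_integral_Ioo, measureReal_def]

theorem IsFirstLastZero.setOf_ne_zero_eq_union {a : ℝ} {u : ℝ → ℝ} {x₀ x₁ : ℝ}
    (hz : IsFirstLastZero u 0 a x₀ x₁) :
    {x | x ∈ Ioo 0 a ∧ u x ≠ 0} =
      (Ioo 0 x₀ ∪ {x | x ∈ Ioo x₀ x₁ ∧ u x ≠ 0}) ∪ Ioo x₁ a := by
  have h₀₁ := hz.first_le_last
  ext x
  simp only [mem_ofPred_eq, mem_union, mem_Ioo]
  constructor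
  · rintro ⟨⟨h0, ha⟩, hne⟩
    rcases lt_or_ge x x₀ with h | h
    · exact Or.inl (Or.inl ⟨h0, h⟩)
    rcases lt_or_ge x₁ x with h' | h'
    · exact Or.inr ⟨h', ha⟩
    refine Or.inl (Or.inr ⟨⟨h.lt_of_ne ?_, h'.lt_of_ne ?_⟩, hne⟩)
    · rintro rfl; exact hne hz.first_zero
    · rintro rfl; exact hne hz.last_zero
  · rintro ((⟨h0, h⟩ | ⟨⟨h0, h⟩, hne⟩) | ⟨h, ha⟩)
    · exact ⟨⟨h0, h.trans (h₀₁.trans_lt hz.last_lt)⟩, hz.ne_zero_before x ⟨h0, h⟩⟩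
    · exact ⟨⟨hz.lt_first.trans h0, h.trans hz.last_lt⟩, hne⟩
    · exact ⟨⟨(hz.lt_first.trans_le h₀₁).trans h, ha⟩, hz.ne_zero_after x ⟨h, ha⟩⟩

namespace Adm1D

variable {a l : ℝ} {u g : ℝ → ℝ}

theorem of_primitive (ha : 0 ≤ a)
    (hg : MemLp g 2 (volume.restrict (Ioo 0 a))) (hu : ∀ x ∈ Icc 0 a, u x = 1 + ∫ t in 0..x, g t)
    (hua : u a = 1) : Adm1D a u g := by
  have hint : IntegrableOn g (uIcc 0 a) := by
    rw [uIcc_of_le ha, integrableOn_Icc_iff_integrableOn_Ioo]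
    exact hg.integrable one_le_two
  have hcont := (continuousOn_const (c := (1 : ℝ))).add
    (intervalIntegral.continuousOn_primitive_interval hint)
  rw [uIcc_of_le ha] at hcont
  refine ⟨hcont.congr hu, hg, hu, ?_, hua⟩
  rw [hu 0 (left_mem_Icc.2 ha), intervalIntegral.integral_same, add_zero]

theorem intervalIntegrable (hadm : Adm1D a u g) {c d : ℝ} (hc : c ∈ Icc 0 a) (hd : d ∈ Icc 0 a) :
    IntervalIntegrable g volume c d :=
  intervalIntegrable_of_integrableOn_Ioo (hadm.2.1.integrable one_le_two) hc hd

theorem intervalIntegrable_sq (hadm : Adm1D a u g) {c d : ℝ} (hc : c ∈ Icc 0 a)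
    (hd : d ∈ Icc 0 a) : IntervalIntegrable (fun x => g x ^ 2) volume c d :=
  intervalIntegrable_of_integrableOn_Ioo hadm.2.1.integrable_sq hc hd

theorem sub_eq_integral (hadm : Adm1D a u g) {c d : ℝ} (hc : c ∈ Icc 0 a) (hd : d ∈ Icc 0 a) :
    u d - u c = ∫ x in c..d, g x := by
  have h0 : (0 : ℝ) ∈ Icc 0 a := ⟨le_rfl, hc.1.trans hc.2⟩
  rw [hadm.2.2.1 d hd, hadm.2.2.1 c hc, add_sub_add_left_eq_sub,
    intervalIntegral.integral_interval_sub_left (hadm.intervalIntegrable h0 hd)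
      (hadm.intervalIntegrable h0 hc)]

theorem sq_sub_div_le_integral_sq (hadm : Adm1D a u g) {c d : ℝ} (hc : 0 ≤ c) (hcd : c ≤ d)
    (hd : d ≤ a) :
    (u d - u c) ^ 2 / (2 * (d - c)) ≤ ∫ x in c..d, g x ^ 2 / 2 := by
  have hc' : c ∈ Icc 0 a := ⟨hc, hcd.trans hd⟩
  have hd' : d ∈ Icc 0 a := ⟨hc.trans hcd, hd⟩
  rw [hadm.sub_eq_integral hc' hd', intervalIntegral.integral_div, mul_comm, ← div_div]
  gcongr
  exact sq_integral_div_le_integral_sq hcd (hadm.intervalIntegrable hc' hd')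
    (hadm.intervalIntegrable_sq hc' hd')

theorem eq_affine_of_integral_sq_eq (hadm : Adm1D a u g) {c d : ℝ} (hc : 0 ≤ c) (hcd : c ≤ d)
    (hd : d ≤ a) (heq : ∫ x in c..d, g x ^ 2 / 2 = (u d - u c) ^ 2 / (2 * (d - c))) :
    ∀ x ∈ Icc c d, u x = u c + (u d - u c) / (d - c) * (x - c) := by
  have hc' : c ∈ Icc 0 a := ⟨hc, hcd.trans hd⟩
  have hd' : d ∈ Icc 0 a := ⟨hc.trans hcd, hd⟩
  rw [hadm.sub_eq_integral hc' hd', intervalIntegral.integral_div, mul_comm, ← div_div,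
    div_left_inj' two_ne_zero] at heq
  intro x hx
  rw [hadm.sub_eq_integral hc' hd', ← integral_eq_mul_of_integral_sq_eq hcd
    (hadm.intervalIntegrable hc' hd') (hadm.intervalIntegrable_sq hc' hd') heq x hx,
    ← hadm.sub_eq_integral hc' ⟨hc.trans hx.1, hx.2.trans hd⟩, add_sub_cancel]

theorem cost1D_eq_of_isFirstLastZero (l : ℝ) (hadm : Adm1D a u g) {x₀ x₁ : ℝ}
    (hz : IsFirstLastZero u 0 a x₀ x₁) :
    cost1D a l u g = ((∫ x in 0..x₀, g x ^ 2 / 2) + l * x₀) + (∫ x in x₀..x₁, g x ^ 2 / 2) +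
      ((∫ x in x₁..a, g x ^ 2 / 2) + l * (a - x₁)) +
        l * volume.real {x | x ∈ Ioo x₀ x₁ ∧ u x ≠ 0} := by
  have h₀₁ := hz.first_le_last
  have h₀ : x₀ ∈ Icc 0 a := ⟨hz.lt_first.le, h₀₁.trans hz.last_lt.le⟩
  have h₁ : x₁ ∈ Icc 0 a := ⟨hz.lt_first.le.trans h₀₁, hz.last_lt.le⟩
  have ha : 0 ≤ a := h₀.1.trans h₀.2
  have h0 : (0 : ℝ) ∈ Icc 0 a := left_mem_Icc.2 ha
  have ha' : a ∈ Icc 0 a := right_mem_Icc.2 ha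
  have hint : ∀ {c d}, c ∈ Icc 0 a → d ∈ Icc 0 a →
      IntervalIntegrable (fun x => g x ^ 2 / 2) volume c d :=
    fun hc hd => (hadm.intervalIntegrable_sq hc hd).div_const 2
  have hdisj₁ : Disjoint (Ioo 0 x₀) {x | x ∈ Ioo x₀ x₁ ∧ u x ≠ 0} :=
    disjoint_left.2 fun x hx hx' => hx'.1.1.not_gt hx.2
  have hdisj₂ : Disjoint (Ioo 0 x₀ ∪ {x | x ∈ Ioo x₀ x₁ ∧ u x ≠ 0}) (Ioo x₁ a) :=
    disjoint_left.2 fun x hx hx' => hx.elim (fun h => (h.2.trans_le h₀₁).not_gt hx'.1)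
      fun h => h.1.2.not_gt hx'.1
  have hIoo : ∀ c d : ℝ, volume (Ioo c d) ≠ ⊤ := fun c d => measure_Ioo_lt_top.ne
  have hfin : volume {x | x ∈ Ioo x₀ x₁ ∧ u x ≠ 0} ≠ ⊤ :=
    measure_ne_top_of_subset (fun x hx => hx.1) (hIoo x₀ x₁)
  rw [cost1D_eq_integral_of_nonneg l u g ha, hz.setOf_ne_zero_eq_union,
    measureReal_union hdisj₂ measurableSet_Ioo (measure_union_ne_top (hIoo 0 x₀) hfin) (hIoo x₁ a),
    measureReal_union' hdisj₁ measurableSet_Ioo (hIoo 0 x₀) hfin,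
    Real.volume_real_Ioo_of_le h₀.1, Real.volume_real_Ioo_of_le h₁.2,
    ← intervalIntegral.integral_add_adjacent_intervals (hint h0 h₀) (hint h₀ ha'),
    ← intervalIntegral.integral_add_adjacent_intervals (hint h₀ h₁) (hint h₁ ha')]
  ring

theorem mul_le_cost1D_of_ne_zero (ha : 0 ≤ a) (hadm : Adm1D a u g)
    (hne : ∀ x ∈ Ioo 0 a, u x ≠ 0) :
    l * a ≤ cost1D a l u g ∧ (cost1D a l u g = l * a → ∀ x ∈ Icc 0 a, u x = 1) := by
  have hset : {x | x ∈ Ioo 0 a ∧ u x ≠ 0} = Ioo 0 a := sep_eq_self_iff_mem_true.2 hne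
  have hu : u 0 = 1 ∧ u a = 1 := hadm.2.2.2
  have hE := hadm.sq_sub_div_le_integral_sq le_rfl ha le_rfl
  rw [hu.1, hu.2, sub_self, zero_pow two_ne_zero, zero_div] at hE
  rw [cost1D_eq_integral_of_nonneg l u g ha, hset, Real.volume_real_Ioo_of_le ha, sub_zero]
  refine ⟨by linarith, fun heq x hx => ?_⟩
  have hflat := hadm.eq_affine_of_integral_sq_eq le_rfl ha le_rfl
    (by rw [hu.1, hu.2, sub_self, zero_pow two_ne_zero, zero_div]; linarith) x hx
  rw [hflat, hu.1, hu.2, sub_self, zero_div, zero_mul, add_zero]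

theorem eq_uTwo_of_isFirstLastZero (hl : 0 < l) (hadm : Adm1D a u g) {x₀ x₁ : ℝ}
    (hz : IsFirstLastZero u 0 a x₀ x₁) (hx₀ : x₀ = 1 / √(2 * l)) (hx₁ : x₁ = a - 1 / √(2 * l))
    (hE₀ : ∫ x in 0..x₀, g x ^ 2 / 2 = (u x₀ - u 0) ^ 2 / (2 * (x₀ - 0)))
    (hE₁ : ∫ x in x₁..a, g x ^ 2 / 2 = (u a - u x₁) ^ 2 / (2 * (a - x₁)))
    (hm : volume {x | x ∈ Ioo x₀ x₁ ∧ u x ≠ 0} = 0) :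
    ∀ x ∈ Icc 0 a, u x = uTwo a l x := by
  have hs : 0 < √(2 * l) := Real.sqrt_pos.2 (by positivity)
  have h₀₁ := hz.first_le_last
  have hleft := hadm.eq_affine_of_integral_sq_eq le_rfl hz.lt_first.le (h₀₁.trans hz.last_lt.le) hE₀
  have hright :=
    hadm.eq_affine_of_integral_sq_eq (hz.lt_first.le.trans h₀₁) hz.last_lt.le le_rfl hE₁
  have hmid := (hadm.1.mono fun x hx => ⟨(hz.lt_first.trans hx.1).le, hx.2.le.trans hz.last_lt.le⟩
    ).eq_zero_of_volume_setOf_ne_zero isOpen_Ioo hm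
  rw [hz.first_zero, hadm.2.2.2.1] at hleft
  rw [hz.last_zero, hadm.2.2.2.2] at hright
  intro x hx
  unfold uTwo
  split_ifs with h₁ h₂
  · rw [hleft x ⟨hx.1, hx₀ ▸ h₁⟩, hx₀]
    field_simp
    ring
  · rcases (hx₁ ▸ h₂).lt_or_eq with h | rfl
    · exact hmid x ⟨hx₀ ▸ lt_of_not_ge h₁, h⟩
    · exact hz.last_zero
  · rw [hright x ⟨(hx₁ ▸ lt_of_not_ge h₂).le, hx.2⟩, hx₁]
    field_simp
    ring

theorem two_sqrt_le_cost1D_of_isFirstLastZero (hl : 0 < l) (hadm : Adm1D a u g) {x₀ x₁ : ℝ}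
    (hz : IsFirstLastZero u 0 a x₀ x₁) :
    2 * √(2 * l) ≤ cost1D a l u g ∧
      (cost1D a l u g = 2 * √(2 * l) → ∀ x ∈ Icc 0 a, u x = uTwo a l x) := by
  have h₀₁ := hz.first_le_last
  have hx₁a : 0 < a - x₁ := sub_pos.2 hz.last_lt
  have hE₀ := hadm.sq_sub_div_le_integral_sq le_rfl hz.lt_first.le (h₀₁.trans hz.last_lt.le)
  have hE₁ := hadm.sq_sub_div_le_integral_sq (hz.lt_first.le.trans h₀₁) hz.last_lt.le le_rfl
  have hv₀ : (u x₀ - u 0) ^ 2 / (2 * (x₀ - 0)) = 1 / (2 * x₀) := by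
    rw [hz.first_zero, hadm.2.2.2.1]; norm_num
  have hv₁ : (u a - u x₁) ^ 2 / (2 * (a - x₁)) = 1 / (2 * (a - x₁)) := by
    rw [hz.last_zero, hadm.2.2.2.2]; norm_num
  have hamgm₀ := sqrt_two_mul_le_one_div_add_mul hl.le hz.lt_first
  have hamgm₁ := sqrt_two_mul_le_one_div_add_mul hl.le hx₁a
  have hmid : 0 ≤ ∫ x in x₀..x₁, g x ^ 2 / 2 :=
    intervalIntegral.integral_nonneg h₀₁ fun x _ => by positivity
  have hm : 0 ≤ l * volume.real {x | x ∈ Ioo x₀ x₁ ∧ u x ≠ 0} :=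
    mul_nonneg hl.le measureReal_nonneg
  rw [hadm.cost1D_eq_of_isFirstLastZero l hz]
  refine ⟨by linarith, fun heq => hadm.eq_uTwo_of_isFirstLastZero hl hz
    (eq_one_div_sqrt_of_one_div_add_mul_eq hl.le hz.lt_first (by linarith)) ?_ (by linarith)
    (by linarith) ?_⟩
  · linarith [eq_one_div_sqrt_of_one_div_add_mul_eq hl.le hx₁a (by linarith)]
  · have hfin : volume {x | x ∈ Ioo x₀ x₁ ∧ u x ≠ 0} ≠ ⊤ :=
      measure_ne_top_of_subset (fun x hx => hx.1) measure_Ioo_lt_top.ne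
    rw [← measureReal_eq_zero_iff hfin]
    nlinarith

theorem cost1D_cases (hl : 0 < l) (ha : 0 ≤ a) (hadm : Adm1D a u g) :
    (l * a ≤ cost1D a l u g ∧ (cost1D a l u g = l * a → ∀ x ∈ Icc 0 a, u x = 1)) ∨
      (2 * √(2 * l) ≤ cost1D a l u g ∧
        (cost1D a l u g = 2 * √(2 * l) → ∀ x ∈ Icc 0 a, u x = uTwo a l x)) := by
  by_cases hz : ∃ x ∈ Ioo 0 a, u x = 0
  · obtain ⟨x, hx, hux⟩ := hz
    have hu : u 0 = 1 ∧ u a = 1 := hadm.2.2.2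
    obtain ⟨x₀, x₁, hz⟩ := hadm.1.exists_isFirstLastZero (by simp [hu.1]) (by simp [hu.2])
      ⟨x, Ioo_subset_Icc_self hx, hux⟩
    exact Or.inr (hadm.two_sqrt_le_cost1D_of_isFirstLastZero hl hz)
  · push Not at hz
    exact Or.inl (hadm.mul_le_cost1D_of_ne_zero ha hz)

end Adm1D

section Candidates

variable {a l x : ℝ}

theorem adm1D_one (ha : 0 ≤ a) : Adm1D a (fun _ => 1) (fun _ => 0) :=
  .of_primitive ha (memLp_const 0) (fun x _ => by simp) rfl

theorem cost1D_one (l : ℝ) (ha : 0 ≤ a) : cost1D a l (fun _ => 1) (fun _ => 0) = l * a := by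
  rw [cost1D_eq_integral_of_nonneg l _ _ ha, sep_eq_self_iff_mem_true.2 fun _ _ => one_ne_zero,
    Real.volume_real_Ioo_of_le ha]
  simp

noncomputable def gTwo (a l : ℝ) (x : ℝ) : ℝ :=
  if x ≤ 1 / √(2 * l) then -√(2 * l) else if x ≤ a - 1 / √(2 * l) then 0 else √(2 * l)

theorem memLp_gTwo (a l : ℝ) (μ : Measure ℝ) [IsFiniteMeasure μ] : MemLp (gTwo a l) 2 μ := by
  refine MemLp.of_bound (Measurable.aestronglyMeasurable ?_) (√(2 * l)) (ae_of_all _ fun x => ?_)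
  · exact Measurable.ite measurableSet_Iic measurable_const <|
      Measurable.ite measurableSet_Iic measurable_const measurable_const
  · unfold gTwo
    split_ifs <;> simp only [norm_neg, norm_zero, Real.norm_of_nonneg (Real.sqrt_nonneg _), le_refl,
      Real.sqrt_nonneg]

theorem gTwo_of_le (hx : x ≤ 1 / √(2 * l)) : gTwo a l x = -√(2 * l) := if_pos hx

theorem gTwo_of_mem_Ioc (hx : x ∈ Ioc (1 / √(2 * l)) (a - 1 / √(2 * l))) : gTwo a l x = 0 := by
  rw [gTwo, if_neg (not_le.2 hx.1), if_pos hx.2]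

theorem gTwo_of_lt (ha : 2 / √(2 * l) ≤ a) (hx : a - 1 / √(2 * l) < x) : gTwo a l x = √(2 * l) := by
  have : 1 / √(2 * l) ≤ a - 1 / √(2 * l) := by linarith [add_div 1 1 (√(2 * l))]
  rw [gTwo, if_neg (not_le.2 (this.trans_lt hx)), if_neg (not_le.2 hx)]

theorem uTwo_of_le (hx : x ≤ 1 / √(2 * l)) : uTwo a l x = 1 - √(2 * l) * x := if_pos hx

theorem uTwo_of_mem_Ioc (hx : x ∈ Ioc (1 / √(2 * l)) (a - 1 / √(2 * l))) : uTwo a l x = 0 := by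
  rw [uTwo, if_neg (not_le.2 hx.1), if_pos hx.2]

theorem uTwo_of_lt (ha : 2 / √(2 * l) ≤ a) (hx : a - 1 / √(2 * l) < x) :
    uTwo a l x = √(2 * l) * x + 1 - √(2 * l) * a := by
  have : 1 / √(2 * l) ≤ a - 1 / √(2 * l) := by linarith [add_div 1 1 (√(2 * l))]
  rw [uTwo, if_neg (not_le.2 (this.trans_lt hx)), if_neg (not_le.2 hx)]

theorem uTwo_eq_one_add_integral (hl : 0 < l) (ha : 2 / √(2 * l) ≤ a) (hx : x ∈ Icc 0 a) :
    uTwo a l x = 1 + ∫ t in 0..x, gTwo a l t := by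
  have hs : 0 < √(2 * l) := Real.sqrt_pos.2 (by positivity)
  have hc : 0 < 1 / √(2 * l) := by positivity
  have hc₁₂ : 1 / √(2 * l) ≤ a - 1 / √(2 * l) := by linarith [add_div 1 1 (√(2 * l))]
  have hmem : ∀ {y}, 0 ≤ y → y ≤ a - 1 / √(2 * l) → y ∈ Icc 0 a :=
    fun h0 h => ⟨h0, h.trans (sub_le_self _ hc.le)⟩
  have h0 := hmem le_rfl (hc.le.trans hc₁₂)
  have hc₁ := hmem hc.le hc₁₂
  have hc₂ := hmem (hc.le.trans hc₁₂) le_rfl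
  have hint : ∀ {c d}, c ∈ Icc 0 a → d ∈ Icc 0 a → IntervalIntegrable (gTwo a l) volume c d :=
    intervalIntegrable_of_integrableOn_Ioo ((memLp_gTwo a l _).integrable one_le_two)
  have hleft : ∀ y ≤ 1 / √(2 * l), 0 ≤ y → ∫ t in 0..y, gTwo a l t = (y - 0) * -√(2 * l) :=
    fun y hy h0 => integral_eq_mul_of_eqOn_Ioc h0 fun t ht => gTwo_of_le (ht.2.trans hy)
  rcases le_or_gt x (1 / √(2 * l)) with h₁ | h₁
  · rw [uTwo_of_le h₁, hleft x h₁ hx.1]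
    ring
  have hI₁ : ∫ t in 0..1 / √(2 * l), gTwo a l t = -1 := by
    rw [hleft _ le_rfl hc.le]
    field_simp
    ring
  rw [← intervalIntegral.integral_add_adjacent_intervals (hint h0 hc₁) (hint hc₁ hx), hI₁]
  rcases le_or_gt x (a - 1 / √(2 * l)) with h₂ | h₂
  · rw [uTwo_of_mem_Ioc ⟨h₁, h₂⟩, integral_eq_mul_of_eqOn_Ioc h₁.le
      fun t ht => gTwo_of_mem_Ioc ⟨ht.1, ht.2.trans h₂⟩]
    ring
  · rw [uTwo_of_lt ha h₂, ← intervalIntegral.integral_add_adjacent_intervals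
      (hint hc₁ hc₂) (hint hc₂ hx),
      integral_eq_mul_of_eqOn_Ioc hc₁₂ fun t ht => gTwo_of_mem_Ioc ht,
      integral_eq_mul_of_eqOn_Ioc h₂.le fun t ht => gTwo_of_lt ha ht.1]
    field_simp
    ring

theorem adm1D_uTwo (hl : 0 < l) (ha : 2 / √(2 * l) ≤ a) : Adm1D a (uTwo a l) (gTwo a l) := by
  have hc : 0 < 1 / √(2 * l) := by positivity
  refine .of_primitive (by linarith [add_div 1 1 (√(2 * l))]) (memLp_gTwo a l _)
    (fun x hx => uTwo_eq_one_add_integral hl ha hx) ?_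
  rw [uTwo_of_lt ha (sub_lt_self a hc)]
  ring

theorem isFirstLastZero_uTwo (hl : 0 < l) (ha : 2 / √(2 * l) ≤ a) :
    IsFirstLastZero (uTwo a l) 0 a (1 / √(2 * l)) (a - 1 / √(2 * l)) := by
  have hs : 0 < √(2 * l) := Real.sqrt_pos.2 (by positivity)
  have hc : 0 < 1 / √(2 * l) := by positivity
  have hc₁₂ : 1 / √(2 * l) ≤ a - 1 / √(2 * l) := by linarith [add_div 1 1 (√(2 * l))]
  have hfirst : uTwo a l (1 / √(2 * l)) = 0 := by
    rw [uTwo_of_le le_rfl]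
    field_simp
    ring
  refine ⟨hc, hc₁₂, sub_lt_self a hc, hfirst, ?_, fun x hx => ?_, fun x hx => ?_⟩
  · rcases hc₁₂.lt_or_eq with h | h
    · exact uTwo_of_mem_Ioc ⟨h, le_rfl⟩
    · rwa [← h]
  · have : x * √(2 * l) < 1 := (lt_div_iff₀ hs).1 hx.2
    rw [uTwo_of_le hx.2.le]
    nlinarith
  · have : (a - x) * √(2 * l) < 1 := (lt_div_iff₀ hs).1 (by linarith [hx.1])
    rw [uTwo_of_lt ha hx.1]
    nlinarith

theorem cost1D_uTwo (hl : 0 < l) (ha : 2 / √(2 * l) ≤ a) :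
    cost1D a l (uTwo a l) (gTwo a l) = 2 * √(2 * l) := by
  have hs : 0 < √(2 * l) := Real.sqrt_pos.2 (by positivity)
  have hz := isFirstLastZero_uTwo hl ha
  have hmid : {x | x ∈ Ioo (1 / √(2 * l)) (a - 1 / √(2 * l)) ∧ uTwo a l x ≠ 0} = ∅ :=
    eq_empty_of_forall_notMem fun x hx => hx.2 (uTwo_of_mem_Ioc (Ioo_subset_Ioc_self hx.1))
  have hsq : √(2 * l) ^ 2 = 2 * l := Real.sq_sqrt (by positivity)
  rw [(adm1D_uTwo hl ha).cost1D_eq_of_isFirstLastZero l hz, hmid, measureReal_empty,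
    integral_eq_mul_of_eqOn_Ioc (c := √(2 * l) ^ 2 / 2) hz.lt_first.le
      fun t ht => by dsimp only; rw [gTwo_of_le ht.2, neg_sq],
    integral_eq_mul_of_eqOn_Ioc (c := 0) hz.first_le_last
      fun t ht => by dsimp only; rw [gTwo_of_mem_Ioc ht]; ring,
    integral_eq_mul_of_eqOn_Ioc (c := √(2 * l) ^ 2 / 2) hz.last_lt.le
      fun t ht => by dsimp only; rw [gTwo_of_lt ha ht.1]]
  calc _ = 2 * (2 * l / √(2 * l)) := by rw [hsq]; ring
    _ = 2 * √(2 * l) := by rw [Real.div_sqrt]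

end Candidates

section Minimizers

variable {a l : ℝ}

theorem min1D_of_forall_le {u g : ℝ → ℝ} (hadm : Adm1D a u g)
    (hle : ∀ v h, Adm1D a v h → cost1D a l u g ≤ cost1D a l v h) : Min1D a l u g := by
  have hbdd : cost1D a l u g ∈ lowerBounds {c | ∃ v h, Adm1D a v h ∧ c = cost1D a l v h} := by
    rintro _ ⟨v, h, hv, rfl⟩
    exact hle v h hv
  exact ⟨hadm, le_antisymm (le_csInf ⟨_, u, g, hadm, rfl⟩ hbdd)
    (csInf_le ⟨_, hbdd⟩ ⟨u, g, hadm, rfl⟩)⟩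

theorem min1D_one (hl : 0 < l) (ha : 0 ≤ a) (h : l * a ≤ 2 * √(2 * l)) :
    Min1D a l (fun _ => 1) (fun _ => 0) := by
  refine min1D_of_forall_le (adm1D_one ha) fun v g hv => ?_
  rw [cost1D_one l ha]
  rcases hv.cost1D_cases hl ha with ⟨hge, -⟩ | ⟨hge, -⟩ <;> linarith

theorem two_div_sqrt_le_of_two_sqrt_le_mul (hl : 0 < l) (h : 2 * √(2 * l) ≤ l * a) :
    2 / √(2 * l) ≤ a := by
  have hs : 0 < √(2 * l) := Real.sqrt_pos.2 (by positivity)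
  rw [div_le_iff₀ hs]
  nlinarith [Real.sq_sqrt (by positivity : 0 ≤ 2 * l)]

theorem min1D_uTwo (hl : 0 < l) (ha : 0 ≤ a) (h : 2 * √(2 * l) ≤ l * a) :
    Min1D a l (uTwo a l) (gTwo a l) := by
  have hlong := two_div_sqrt_le_of_two_sqrt_le_mul hl h
  refine min1D_of_forall_le (adm1D_uTwo hl hlong) fun v g hv => ?_
  rw [cost1D_uTwo hl hlong]
  rcases hv.cost1D_cases hl ha with ⟨hge, -⟩ | ⟨hge, -⟩ <;> linarith

theorem I1D_eq_mul (hl : 0 < l) (ha : 0 ≤ a) (h : l * a ≤ 2 * √(2 * l)) : I1D a l = l * a :=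
  (min1D_one hl ha h).2.symm.trans (cost1D_one l ha)

theorem I1D_eq_two_sqrt (hl : 0 < l) (ha : 0 ≤ a) (h : 2 * √(2 * l) ≤ l * a) :
    I1D a l = 2 * √(2 * l) :=
  (min1D_uTwo hl ha h).2.symm.trans (cost1D_uTwo hl (two_div_sqrt_le_of_two_sqrt_le_mul hl h))

end Minimizers

/-- Structure of the minimizers of the 1D free boundary problem:
below the threshold `a < 2√(2/λ)` the unique minimizer is `u ≡ 1`, above it
the unique minimizer is `u₂`, and at the threshold exactly these two functions
are minimizers. -/
theorem stmt14 (a l : ℝ) (ha : 0 < a) (hl : 0 < l) :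
    (a < 2 * Real.sqrt (2 / l) →
      (∃ g, Min1D a l (fun _ => 1) g) ∧
      ∀ u g, Min1D a l u g → ∀ x ∈ Set.Icc 0 a, u x = 1) ∧
    (2 * Real.sqrt (2 / l) < a →
      (∃ g, Min1D a l (uTwo a l) g) ∧
      ∀ u g, Min1D a l u g → ∀ x ∈ Set.Icc 0 a, u x = uTwo a l x) ∧
    (a = 2 * Real.sqrt (2 / l) →
      (∃ g, Min1D a l (fun _ => 1) g) ∧ (∃ g, Min1D a l (uTwo a l) g) ∧
      ∀ u g, Min1D a l u g →
        (∀ x ∈ Set.Icc 0 a, u x = 1) ∨ (∀ x ∈ Set.Icc 0 a, u x = uTwo a l x)) := by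
  have hthreshold : 2 * √(2 / l) = 2 * √(2 * l) / l := by
    rw [show 2 / l = 2 * l / l ^ 2 by field_simp, Real.sqrt_div' _ (sq_nonneg l),
      Real.sqrt_sq hl.le, mul_div_assoc]
  rw [hthreshold, lt_div_iff₀ hl, div_lt_iff₀ hl, eq_div_iff hl.ne', mul_comm a l]
  refine ⟨fun h => ⟨⟨_, min1D_one hl ha.le h.le⟩, fun u g hmin => ?_⟩,
    fun h => ⟨⟨_, min1D_uTwo hl ha.le h.le⟩, fun u g hmin => ?_⟩,
    fun h => ⟨⟨_, min1D_one hl ha.le h.le⟩, ⟨_, min1D_uTwo hl ha.le h.ge⟩, fun u g hmin => ?_⟩⟩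
  · have hcost := hmin.2.trans (I1D_eq_mul hl ha.le h.le)
    rcases hmin.1.cost1D_cases hl ha.le with ⟨-, heq⟩ | ⟨hge, -⟩
    · exact heq hcost
    · linarith
  · have hcost := hmin.2.trans (I1D_eq_two_sqrt hl ha.le h.le)
    rcases hmin.1.cost1D_cases hl ha.le with ⟨hge, -⟩ | ⟨-, heq⟩
    · linarith
    · exact heq hcost
  · have hcost := hmin.2.trans (I1D_eq_two_sqrt hl ha.le h.ge)
    rcases hmin.1.cost1D_cases hl ha.le with ⟨-, heq⟩ | ⟨-, heq⟩
    · exact .inl (heq (hcost.trans h.symm))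
    · exact .inr (heq hcost)
end

section
/- If σ is a continuous field on Ω × ℝ with σ^t(x,t) ≥ f*_z(t, σ^x(x,t)) everywhere, and u ∈ W^{1,p}(Ω), then equality ∫_Ω f(u,∇u) dx = ∫_Ω [σ^x(x,u)·∇u − σ^t(x,u)] dx holds if and only if for a.e. x: σ^x(x,u(x)) ∈ ∂_z f(u(x), ∇u(x)) and σ^t(x,u(x)) = f*_z(u(x), σ^x(x,u(x))). -/
open MeasureTheory
open scoped ENNReal BigOperators

/-- Partial Fenchel conjugate of `f` in the `z` variable. -/
noncomputable def fenchelZ {N : ℕ} (f : ℝ → (Fin N → ℝ) → EReal) (t : ℝ)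
    (zs : Fin N → ℝ) : EReal :=
  ⨆ z : Fin N → ℝ, (((∑ i, z i * zs i : ℝ) : EReal) - f t z)

/-- Send an `EReal` to `ℝ≥0∞` (negative values go to `0`). -/
noncomputable def erealToENNReal (x : EReal) : ℝ≥0∞ :=
  if x = ⊤ then ⊤ else ENNReal.ofReal x.toReal

/-- Euclidean norm on `Fin N → ℝ`. -/
noncomputable def eucNorm {N : ℕ} (z : Fin N → ℝ) : ℝ :=
  Real.sqrt (∑ i, z i ^ 2)

/-- `g` is the weak (distributional) gradient of `u` on `Ω`. -/
def IsWeakGradOn {N : ℕ} (Ω : Set (Fin N → ℝ)) (u : (Fin N → ℝ) → ℝ)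
    (g : (Fin N → ℝ) → (Fin N → ℝ)) : Prop :=
  ∀ φ : (Fin N → ℝ) → ℝ, ContDiff ℝ (⊤ : ℕ∞) φ → HasCompactSupport φ → tsupport φ ⊆ Ω →
    ∀ i : Fin N, ∫ x in Ω, u x * fderiv ℝ φ x (Pi.single i 1) =
      - ∫ x in Ω, g x i * φ x

/-- The bulk energy `∫_Ω f(u,∇u) dx`, valued in `EReal`
(computed after the shift by `C ≥ r`). -/
noncomputable def bulkE {N : ℕ} (f : ℝ → (Fin N → ℝ) → EReal)
    (Ω : Set (Fin N → ℝ)) (C : ℝ) (u : (Fin N → ℝ) → ℝ)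
    (g : (Fin N → ℝ) → (Fin N → ℝ)) : EReal :=
  ((∫⁻ x in Ω, erealToENNReal (f (u x) (g x) + (C : ℝ)) ∂volume : ℝ≥0∞) : EReal)
    - ((C * (volume Ω).toReal : ℝ) : EReal)

lemma erealToENNReal_coe (a : ℝ) : erealToENNReal (a : EReal) = ENNReal.ofReal a := by
  simp [erealToENNReal]

lemma erealToENNReal_mono : Monotone erealToENNReal := by
  intro x y h
  unfold erealToENNReal
  rcases eq_or_ne y ⊤ with rfl | hy
  · simp
  rcases eq_or_ne x ⊤ with rfl | hx
  · exact absurd (top_le_iff.mp h) hy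
  simp only [hx, hy, if_false]
  rcases eq_or_ne x ⊥ with rfl | hxb
  · simp
  exact ENNReal.ofReal_le_ofReal (EReal.toReal_le_toReal h hxb hy)

lemma measurable_erealToENNReal : Measurable erealToENNReal := by
  unfold erealToENNReal
  have : Measurable fun x : EReal => ENNReal.ofReal x.toReal :=
    ENNReal.measurable_ofReal.comp measurable_ereal_toReal
  have hs : MeasurableSet {x : EReal | x = ⊤} := by
    have : {x : EReal | x = ⊤} = {⊤} := by ext x; simp
    rw [this]; exact MeasurableSet.singleton _
  exact Measurable.ite hs measurable_const this

lemma sum_mul_sub {N : ℕ} (σx z gv : Fin N → ℝ) :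
    (∑ i, σx i * (z i - gv i)) = (∑ i, z i * σx i) - ∑ i, σx i * gv i := by
  rw [← Finset.sum_sub_distrib]
  exact Finset.sum_congr rfl fun i _ => by ring

lemma pointwise_fwd {N : ℕ} (f : ℝ → (Fin N → ℝ) → EReal) (t : ℝ) (σx : Fin N → ℝ) (σt : ℝ)
    (gv : Fin N → ℝ)
    (hbot : ∀ z, f t z ≠ ⊥)
    (hK : fenchelZ f t σx ≤ (σt : EReal))
    (hne : f t gv ≠ ⊤)
    (heq : (f t gv).toReal = (∑ i, σx i * gv i) - σt) :
    (∀ z, f t gv + (((∑ i, σx i * (z i - gv i)) : ℝ) : EReal) ≤ f t z) ∧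
      ((σt : ℝ) : EReal) = fenchelZ f t σx := by
  set a : ℝ := (f t gv).toReal with ha
  have hF : ((a : ℝ) : EReal) = f t gv := EReal.coe_toReal hne (hbot gv)
  constructor
  · intro z
    rcases eq_or_ne (f t z) ⊤ with hz | hz
    · rw [hz]; exact le_top
    have hb : ((f t z).toReal : EReal) = f t z := EReal.coe_toReal hz (hbot z)
    set b : ℝ := (f t z).toReal with hbb
    have h1 : (((∑ i, z i * σx i : ℝ)) : EReal) - f t z ≤ (σt : EReal) :=
      le_trans (le_iSup (fun w => (((∑ i, w i * σx i : ℝ)) : EReal) - f t w) z) hK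
    rw [← hb, ← EReal.coe_sub, EReal.coe_le_coe_iff] at h1
    rw [← hF, ← hb, ← EReal.coe_add, EReal.coe_le_coe_iff]
    have := sum_mul_sub σx z gv
    nlinarith [h1, heq, this]
  · refine le_antisymm ?_ hK
    have h2 : (((∑ i, gv i * σx i : ℝ)) : EReal) - f t gv ≤ fenchelZ f t σx :=
      le_iSup (fun w => (((∑ i, w i * σx i : ℝ)) : EReal) - f t w) gv
    rw [← hF, ← EReal.coe_sub] at h2
    have h3 : (∑ i, gv i * σx i) - a = σt := by
      have : (∑ i, gv i * σx i) = ∑ i, σx i * gv i :=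
        Finset.sum_congr rfl fun i _ => mul_comm _ _
      rw [this, heq]; ring
    rwa [h3] at h2

lemma pointwise_bwd {N : ℕ} (f : ℝ → (Fin N → ℝ) → EReal) (t : ℝ) (σx : Fin N → ℝ) (σt : ℝ)
    (gv : Fin N → ℝ)
    (hbot : ∀ z, f t z ≠ ⊥)
    (hne : f t gv ≠ ⊤)
    (hsub : ∀ z, f t gv + (((∑ i, σx i * (z i - gv i)) : ℝ) : EReal) ≤ f t z)
    (hconj : ((σt : ℝ) : EReal) = fenchelZ f t σx) :
    (f t gv).toReal = (∑ i, σx i * gv i) - σt := by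
  set a : ℝ := (f t gv).toReal with ha
  have hF : ((a : ℝ) : EReal) = f t gv := EReal.coe_toReal hne (hbot gv)
  set S : ℝ := ∑ i, σx i * gv i with hS
  have hle : fenchelZ f t σx ≤ ((S - a : ℝ) : EReal) := by
    refine iSup_le fun z => ?_
    rcases eq_or_ne (f t z) ⊤ with hz | hz
    · rw [hz]
      simp [EReal.sub_top]
    have hb : ((f t z).toReal : EReal) = f t z := EReal.coe_toReal hz (hbot z)
    have h1 := hsub z
    rw [← hF, ← hb, ← EReal.coe_add, EReal.coe_le_coe_iff] at h1
    rw [← hb, ← EReal.coe_sub, EReal.coe_le_coe_iff]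
    have := sum_mul_sub σx z gv
    nlinarith [h1, this]
  have hge : ((S - a : ℝ) : EReal) ≤ fenchelZ f t σx := by
    have h2 : (((∑ i, gv i * σx i : ℝ)) : EReal) - f t gv ≤ fenchelZ f t σx :=
      le_iSup (fun w => (((∑ i, w i * σx i : ℝ)) : EReal) - f t w) gv
    rw [← hF, ← EReal.coe_sub] at h2
    have : (∑ i, gv i * σx i) - a = S - a := by
      rw [hS]; congr 1
      exact Finset.sum_congr rfl fun i _ => mul_comm _ _
    rwa [this] at h2
  have : ((σt : ℝ) : EReal) = ((S - a : ℝ) : EReal) := by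
    rw [hconj]; exact le_antisymm hle hge
  have := EReal.coe_eq_coe_iff.mp this
  linarith

lemma abs_le_eucNorm {N : ℕ} (z : Fin N → ℝ) (i : Fin N) : |z i| ≤ eucNorm z := by
  rw [eucNorm, ← Real.sqrt_sq_eq_abs]
  exact Real.sqrt_le_sqrt
    (Finset.single_le_sum (fun j _ => sq_nonneg (z j)) (Finset.mem_univ i))

lemma eucNorm_nonneg {N : ℕ} (z : Fin N → ℝ) : 0 ≤ eucNorm z := Real.sqrt_nonneg _

/-- Equality in the weak duality inequality holds iff, a.e. in `Ω`,
`σ^x(x,u(x)) ∈ ∂_z f(u(x),∇u(x))` and `σ^t(x,u(x)) = f*_z(u(x), σ^x(x,u(x)))`. -/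
theorem stmt18 {N : ℕ} (Ω : Set (Fin N → ℝ))
    (hΩ : IsOpen Ω) (hΩbd : Bornology.IsBounded Ω)
    (f : ℝ → (Fin N → ℝ) → EReal) (α p C : ℝ) (hα : 0 < α) (hp : 1 < p)
    (r : ℝ → ℝ) (hr : ∀ t, 0 ≤ r t ∧ r t ≤ C)
    (hconv : ∀ (t : ℝ) (z₁ z₂ : Fin N → ℝ) (a b : ℝ), 0 ≤ a → 0 ≤ b → a + b = 1 →
      f t (a • z₁ + b • z₂) ≤ (a : EReal) * f t z₁ + (b : EReal) * f t z₂)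
    (hlsc : LowerSemicontinuous (fun q : ℝ × (Fin N → ℝ) => f q.1 q.2))
    (hproper : ∀ t, (∃ z, f t z ≠ ⊤) ∧ ∀ z, f t z ≠ ⊥)
    (hgrowth : ∀ (t : ℝ) (z : Fin N → ℝ),
      ((α * eucNorm z ^ p - r t : ℝ) : EReal) ≤ f t z)
    (u : (Fin N → ℝ) → ℝ) (g : (Fin N → ℝ) → (Fin N → ℝ))
    (hu : MemLp u (ENNReal.ofReal p) (volume.restrict Ω))
    (hg : MemLp g (ENNReal.ofReal p) (volume.restrict Ω))
    (hgrad : IsWeakGradOn Ω u g)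
    (hfin : ∀ᵐ x ∂(volume.restrict Ω), f (u x) (g x) ≠ ⊤)
    (σ : (Fin N → ℝ) × ℝ → (Fin N → ℝ) × ℝ)
    (hσc : Continuous σ) (hσbd : ∃ M : ℝ, ∀ q, eucNorm (σ q).1 + |(σ q).2| ≤ M)
    (hσK : ∀ (x : Fin N → ℝ) (t : ℝ), x ∈ Ω →
      fenchelZ f t ((σ (x, t)).1) ≤ (((σ (x, t)).2 : ℝ) : EReal)) :
    (bulkE f Ω C u g =
        (((∫ x in Ω, ((∑ i, (σ (x, u x)).1 i * g x i) - (σ (x, u x)).2)) : ℝ) : EReal))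
      ↔ (∀ᵐ x ∂(volume.restrict Ω),
          (∀ z : Fin N → ℝ,
            f (u x) (g x) +
              (((∑ i, (σ (x, u x)).1 i * (z i - g x i)) : ℝ) : EReal) ≤ f (u x) z) ∧
          (((σ (x, u x)).2 : ℝ) : EReal) = fenchelZ f (u x) ((σ (x, u x)).1)) := by
  classical
  have hΩm : MeasurableSet Ω := hΩ.measurableSet
  haveI : Fact (volume Ω < ⊤) := ⟨hΩbd.measure_lt_top⟩
  set μ : Measure (Fin N → ℝ) := volume.restrict Ω with hμdef
  -- basic positivity / bot facts about f
  have hbot : ∀ t z, f t z ≠ ⊥ := fun t z => (hproper t).2 z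
  have hgeC : ∀ t z, ((-C : ℝ) : EReal) ≤ f t z := by
    intro t z
    refine le_trans ?_ (hgrowth t z)
    rw [EReal.coe_le_coe_iff]
    have h1 : 0 ≤ α * eucNorm z ^ p := by
      have := eucNorm_nonneg z
      positivity
    linarith [(hr t).2]
  -- the real-valued integrand
  set S : (Fin N → ℝ) → ℝ :=
    fun x => (∑ i, (σ (x, u x)).1 i * g x i) - (σ (x, u x)).2 with hSdef
  set h : (Fin N → ℝ) → ℝ := fun x => S x + C with hhdef
  set φ : (Fin N → ℝ) → ℝ≥0∞ :=
    fun x => erealToENNReal (f (u x) (g x) + (C : ℝ)) with hφdef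
  set c : ℝ := C * (volume Ω).toReal with hcdef
  set I : ℝ := ∫ x, S x ∂μ with hIdef
  -- measurability
  have hums : AEStronglyMeasurable u μ := hu.1
  have hgms : AEStronglyMeasurable g μ := hg.1
  have hσms : AEStronglyMeasurable (fun x => σ (x, u x)) μ :=
    hσc.comp_aestronglyMeasurable (aestronglyMeasurable_id.prodMk hums)
  have hSms : AEStronglyMeasurable S μ := by
    refine AEStronglyMeasurable.sub ?_ (continuous_snd.comp_aestronglyMeasurable hσms)
    refine Finset.aestronglyMeasurable_fun_sum _ fun i _ => ?_
    exact (((continuous_apply i).comp continuous_fst).comp_aestronglyMeasurable hσms).mul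
      ((continuous_apply i).comp_aestronglyMeasurable hgms)
  have hp1 : (1 : ℝ≥0∞) ≤ ENNReal.ofReal p := by
    rw [← ENNReal.ofReal_one]
    exact ENNReal.ofReal_le_ofReal hp.le
  have hgi : Integrable g μ := hg.integrable hp1
  obtain ⟨M, hMb⟩ := hσbd
  have hM0 : 0 ≤ M :=
    le_trans (add_nonneg (eucNorm_nonneg _) (abs_nonneg _)) (hMb (0, 0))
  have hSi : Integrable S μ := by
    refine Integrable.mono' (((hgi.norm.const_mul (M * N)).add (integrable_const M))) hSms ?_
    refine Filter.Eventually.of_forall fun x => ?_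
    have hb1 : ∀ i, |(σ (x, u x)).1 i| ≤ M := fun i =>
      le_trans (abs_le_eucNorm _ i)
        (le_trans (le_add_of_nonneg_right (abs_nonneg _)) (hMb _))
    have hb2 : |(σ (x, u x)).2| ≤ M :=
      le_trans (le_add_of_nonneg_left (eucNorm_nonneg _)) (hMb _)
    have hsum : |∑ i, (σ (x, u x)).1 i * g x i| ≤ M * N * ‖g x‖ := by
      calc |∑ i, (σ (x, u x)).1 i * g x i| ≤ ∑ i, |(σ (x, u x)).1 i * g x i| :=
            Finset.abs_sum_le_sum_abs _ _
        _ ≤ ∑ _i : Fin N, M * ‖g x‖ := by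
            refine Finset.sum_le_sum fun i _ => ?_
            rw [abs_mul]
            refine mul_le_mul (hb1 i) ?_ (abs_nonneg _) hM0
            simpa [Real.norm_eq_abs] using norm_le_pi_norm (g x) i
        _ = M * N * ‖g x‖ := by simp [Finset.sum_const]; ring
    calc ‖S x‖ = |(∑ i, (σ (x, u x)).1 i * g x i) - (σ (x, u x)).2| := rfl
      _ ≤ |∑ i, (σ (x, u x)).1 i * g x i| + |(σ (x, u x)).2| := abs_sub _ _
      _ ≤ M * N * ‖g x‖ + M := add_le_add hsum hb2
      _ = M * ↑N * ‖g x‖ + M := rfl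
  have hhi : Integrable h μ := hSi.add (integrable_const C)
  have hIc : ∫ x, h x ∂μ = I + c := by
    rw [hhdef]
    rw [integral_add hSi (integrable_const C), integral_const]
    have : μ Set.univ = volume Ω := by rw [hμdef, Measure.restrict_apply_univ]
    rw [measureReal_def, this, smul_eq_mul, hcdef, hIdef, mul_comm]
  have hfm : Measurable (fun q : ℝ × (Fin N → ℝ) => f q.1 q.2) := hlsc.measurable
  have haddC : Measurable (fun y : EReal => y + ((C : ℝ) : EReal)) := by
    apply EReal.measurable_of_measurable_real
    have : Measurable fun p : ℝ => ((p + C : ℝ) : EReal) :=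
      (measurable_id.add_const C).coe_real_ereal
    simpa [EReal.coe_add] using this
  have hFaem : AEMeasurable (fun x => f (u x) (g x)) μ :=
    hfm.comp_aemeasurable (hums.aemeasurable.prodMk hgms.aemeasurable)
  have hφaem : AEMeasurable φ μ :=
    measurable_erealToENNReal.comp_aemeasurable (haddC.comp_aemeasurable hFaem)
  have hψaem : AEMeasurable (fun x => ENNReal.ofReal (h x)) μ :=
    ENNReal.measurable_ofReal.comp_aemeasurable hhi.1.aemeasurable
  -- pointwise Fenchel–Young
  have hψφ : ∀ x ∈ Ω, ENNReal.ofReal (h x) ≤ φ x := by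
    intro x hx
    have hK := hσK x (u x) hx
    have hterm : (((∑ i, g x i * (σ (x, u x)).1 i : ℝ)) : EReal) - f (u x) (g x)
        ≤ (((σ (x, u x)).2 : ℝ) : EReal) :=
      le_trans (le_iSup (fun w => (((∑ i, w i * (σ (x, u x)).1 i : ℝ)) : EReal)
        - f (u x) w) (g x)) hK
    rcases eq_or_ne (f (u x) (g x)) ⊤ with htop | htop
    · have : φ x = ⊤ := by
        rw [hφdef]; simp only [htop, EReal.top_add_coe, erealToENNReal]
        simp
      rw [this]; exact le_top
    · have ha : (((f (u x) (g x)).toReal : ℝ) : EReal) = f (u x) (g x) :=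
        EReal.coe_toReal htop (hbot _ _)
      set a : ℝ := (f (u x) (g x)).toReal with hadef
      rw [← ha, ← EReal.coe_sub, EReal.coe_le_coe_iff] at hterm
      have hSa : S x ≤ a := by
        have : (∑ i, g x i * (σ (x, u x)).1 i) = ∑ i, (σ (x, u x)).1 i * g x i :=
          Finset.sum_congr rfl fun i _ => mul_comm _ _
        rw [this] at hterm
        rw [hSdef]; dsimp only; linarith
      have hφx : φ x = ENNReal.ofReal (a + C) := by
        rw [hφdef]; dsimp only
        rw [← ha, ← EReal.coe_add, erealToENNReal_coe]
      rw [hφx]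
      exact ENNReal.ofReal_le_ofReal (by rw [hhdef]; dsimp only; linarith)
  have hψφae : (fun x => ENNReal.ofReal (h x)) ≤ᵐ[μ] φ :=
    (ae_restrict_mem hΩm).mono fun x hx => hψφ x hx
  -- unfold bulkE
  rw [bulkE]
  constructor
  · intro E
    set L : ℝ≥0∞ := ∫⁻ x, φ x ∂μ with hLdef
    have hE : ((L : ℝ≥0∞) : EReal) - ((c : ℝ) : EReal) = ((I : ℝ) : EReal) := E
    have hLne : L ≠ ⊤ := by
      intro hL
      rw [hL, EReal.coe_ennreal_top, EReal.top_sub_coe] at hE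
      exact (EReal.coe_ne_top I) hE.symm
    have hLr : ((L.toReal : ℝ) : EReal) - ((c : ℝ) : EReal) = ((I : ℝ) : EReal) := by
      have hcoe : ((L : ℝ≥0∞) : EReal) = ((L.toReal : ℝ) : EReal) := by
        conv_lhs => rw [← ENNReal.ofReal_toReal hLne]
        rw [EReal.coe_ennreal_ofReal, max_eq_left ENNReal.toReal_nonneg]
      rw [← hcoe]; exact hE
    have hLI : L.toReal = I + c := by
      rw [← EReal.coe_sub, EReal.coe_eq_coe_iff] at hLr; linarith
    have hinth : ∫ x, h x ∂μ = L.toReal := by rw [hIc, hLI]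
    have hIc0 : 0 ≤ ∫ x, h x ∂μ := by rw [hinth]; exact ENNReal.toReal_nonneg
    set h2 : (Fin N → ℝ) → ℝ := fun x => max (h x) 0 with hh2def
    have hh2i : Integrable h2 μ := hhi.pos_part
    have hofeq : ∀ x, ENNReal.ofReal (h x) = ENNReal.ofReal (h2 x) := by
      intro x; rcases le_total 0 (h x) with h0 | h0
      · rw [hh2def]; dsimp only; rw [max_eq_left h0]
      · rw [hh2def]; dsimp only
        rw [max_eq_right h0, ENNReal.ofReal_eq_zero.2 h0, ENNReal.ofReal_zero]
    have hlψ2 : ∫⁻ x, ENNReal.ofReal (h x) ∂μ = ENNReal.ofReal (∫ x, h2 x ∂μ) := by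
      simp_rw [hofeq]
      exact (ofReal_integral_eq_lintegral_ofReal hh2i
        (Filter.Eventually.of_forall fun x => le_max_right _ _)).symm
    have hmono : ∫ x, h x ∂μ ≤ ∫ x, h2 x ∂μ :=
      integral_mono hhi hh2i fun x => le_max_left _ _
    have hψleL : ∫⁻ x, ENNReal.ofReal (h x) ∂μ ≤ L := lintegral_mono_ae hψφae
    have hLeq : L = ENNReal.ofReal (∫ x, h x ∂μ) := by
      rw [hinth, ENNReal.ofReal_toReal hLne]
    have heq2 : ENNReal.ofReal (∫ x, h2 x ∂μ) ≤ ENNReal.ofReal (∫ x, h x ∂μ) := by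
      rw [← hlψ2, ← hLeq]; exact hψleL
    have hinteq : ∫ x, h2 x ∂μ = ∫ x, h x ∂μ :=
      le_antisymm ((ENNReal.ofReal_le_ofReal_iff hIc0).mp heq2) hmono
    have hsub0 : ∫ x, (h2 x - h x) ∂μ = 0 := by
      rw [integral_sub hh2i hhi, hinteq, sub_self]
    have hae0 : (fun x => h2 x - h x) =ᵐ[μ] 0 :=
      (integral_eq_zero_iff_of_nonneg
        (fun x => sub_nonneg.2 (le_max_left _ _)) (hh2i.sub hhi)).mp hsub0
    have hh0 : ∀ᵐ x ∂μ, 0 ≤ h x := by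
      filter_upwards [hae0] with x hx
      have h1 : h2 x - h x = 0 := hx
      have h2x : 0 ≤ h2 x := le_max_right _ _
      linarith
    have hψL : ∫⁻ x, ENNReal.ofReal (h x) ∂μ = L := by
      rw [hlψ2, hinteq, ← hLeq]
    have hψne : ∫⁻ x, ENNReal.ofReal (h x) ∂μ ≠ ⊤ := by rw [hψL]; exact hLne
    have hdiff : ∫⁻ x, (φ x - ENNReal.ofReal (h x)) ∂μ = 0 := by
      rw [lintegral_sub' hψaem hψne hψφae, hψL, ← hLdef, tsub_self]
    have haeeq : ∀ᵐ x ∂μ, φ x = ENNReal.ofReal (h x) := by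
      have h0 := (lintegral_eq_zero_iff' (hφaem.sub hψaem)).mp hdiff
      filter_upwards [h0, hψφae] with x h1 h2
      have h3 : φ x - ENNReal.ofReal (h x) = 0 := h1
      exact le_antisymm (tsub_eq_zero_iff_le.mp h3) h2
    filter_upwards [haeeq, hh0, hfin, ae_restrict_mem hΩm] with x heq hpos htop hx
    have ha : (((f (u x) (g x)).toReal : ℝ) : EReal) = f (u x) (g x) :=
      EReal.coe_toReal htop (hbot _ _)
    set a : ℝ := (f (u x) (g x)).toReal with hadef
    have haC : -C ≤ a := by
      have h4 := hgeC (u x) (g x)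
      rw [← ha, EReal.coe_le_coe_iff] at h4; exact h4
    have hφx : φ x = ENNReal.ofReal (a + C) := by
      rw [hφdef]; dsimp only
      rw [← ha, ← EReal.coe_add, erealToENNReal_coe]
    rw [hφx] at heq
    have haS : a + C = h x := (ENNReal.ofReal_eq_ofReal_iff (by linarith) hpos).mp heq
    have heqa : a = S x := by
      have h5 : h x = S x + C := rfl
      rw [h5] at haS; linarith
    exact pointwise_fwd f (u x) _ _ (g x) (hbot (u x)) (hσK x (u x) hx) htop heqa
  · intro hae
    have haeS : ∀ᵐ x ∂μ, (f (u x) (g x)).toReal = S x ∧ f (u x) (g x) ≠ ⊤ := by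
      filter_upwards [hae, hfin] with x hx htop
      exact ⟨pointwise_bwd f (u x) _ _ (g x) (hbot (u x)) htop hx.1 hx.2, htop⟩
    have hφeq : ∀ᵐ x ∂μ, φ x = ENNReal.ofReal (h x) := by
      filter_upwards [haeS] with x hx
      obtain ⟨hx1, htop⟩ := hx
      have ha : (((f (u x) (g x)).toReal : ℝ) : EReal) = f (u x) (g x) :=
        EReal.coe_toReal htop (hbot _ _)
      rw [hφdef]; dsimp only
      rw [← ha, ← EReal.coe_add, erealToENNReal_coe, hx1]
    have hpos : ∀ᵐ x ∂μ, 0 ≤ h x := by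
      filter_upwards [haeS] with x hx
      obtain ⟨hx1, htop⟩ := hx
      have h4 := hgeC (u x) (g x)
      rw [← EReal.coe_toReal htop (hbot _ _), EReal.coe_le_coe_iff] at h4
      have h5 : h x = S x + C := rfl
      rw [h5, ← hx1]; linarith
    have hLh : ∫⁻ x, φ x ∂μ = ENNReal.ofReal (∫ x, h x ∂μ) := by
      rw [lintegral_congr_ae hφeq]
      exact (ofReal_integral_eq_lintegral_ofReal hhi hpos).symm
    have hIc0 : 0 ≤ ∫ x, h x ∂μ := integral_nonneg_of_ae hpos
    have hIc0' : 0 ≤ I + c := by rw [← hIc]; exact hIc0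
    show ((∫⁻ x, φ x ∂μ : ℝ≥0∞) : EReal) - ((c : ℝ) : EReal) = ((I : ℝ) : EReal)
    rw [hLh, hIc, EReal.coe_ennreal_ofReal, max_eq_left hIc0', ← EReal.coe_sub,
      add_sub_cancel_right]
end
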